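/- (Discontinuity at zero key rate.) There exist finite alphabets 𝒳, 𝒴, 𝒵, a pmf p₀ on 𝒳, a payoff function π : 𝒳 × 𝒴 × 𝒵 → ℝ, and a rate R ≥ 0 such that sup over conditional pmfs p(y|x) with I(X;Y) ≤ R of min over z ∈ 𝒵 of E[π(X,Y,z)] is strictly greater than Γ_{p₀,π}(0,R), the single-letter value at secret key rate R₀ = 0. (Since the robust achievable value against an adversary who sees only the message equals the former expression for every R₀ > 0 and equals Γ_{p₀,π}(0,R) at R₀ = 0, the value is discontinuous in R₀ at R₀ = 0.) -/

import Mathlib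

open scoped BigOperators Classical

noncomputable section

/-! ### Finite probability basics -/

/-- A probability mass function on a finite type, given as a real-valued function. -/
def IsPMF {α : Type} [Fintype α] (p : α → ℝ) : Prop :=
  (∀ a, 0 ≤ p a) ∧ ∑ a, p a = 1

/-- The probability that the random variable `A` takes the value `a` under the pmf `p`. -/
def probOf {Ω : Type} {α : Type} [Fintype Ω] (p : Ω → ℝ) (A : Ω → α) (a : α) : ℝ :=
  ∑ ω, if A ω = a then p ω else 0

/-- Shannon entropy (in bits) of the random variable `A` under the pmf `p`. -/
def entropy {Ω α : Type} [Fintype Ω] [Fintype α] (p : Ω → ℝ) (A : Ω → α) : ℝ :=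
  -∑ a, probOf p A a * Real.logb 2 (probOf p A a)

/-- Conditional Shannon entropy `H(A | C)` (in bits). -/
def condEntropy {Ω α γ : Type} [Fintype Ω] [Fintype α] [Fintype γ]
    (p : Ω → ℝ) (A : Ω → α) (C : Ω → γ) : ℝ :=
  entropy p (fun ω => (A ω, C ω)) - entropy p C

/-- Shannon mutual information `I(A;B)` (in bits). -/
def mutualInfo {Ω α β : Type} [Fintype Ω] [Fintype α] [Fintype β]
    (p : Ω → ℝ) (A : Ω → α) (B : Ω → β) : ℝ :=
  entropy p A + entropy p B - entropy p (fun ω => (A ω, B ω))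

/-- Conditional Shannon mutual information `I(A;B|C)` (in bits). -/
def condMutualInfo {Ω α β γ : Type} [Fintype Ω] [Fintype α] [Fintype β] [Fintype γ]
    (p : Ω → ℝ) (A : Ω → α) (B : Ω → β) (C : Ω → γ) : ℝ :=
  entropy p (fun ω => (A ω, C ω)) + entropy p (fun ω => (B ω, C ω))
    - entropy p (fun ω => (A ω, B ω, C ω)) - entropy p C

/-- Conditional independence `A ⟂ B | C` under the pmf `p`:
`P(A=a, B=b, C=c) · P(C=c) = P(A=a, C=c) · P(B=b, C=c)` for all `a, b, c`. -/
def CondIndep {Ω α β γ : Type} [Fintype Ω] (p : Ω → ℝ)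
    (A : Ω → α) (B : Ω → β) (C : Ω → γ) : Prop :=
  ∀ a b c,
    probOf p (fun ω => (A ω, B ω, C ω)) (a, b, c) * probOf p C c
      = probOf p (fun ω => (A ω, C ω)) (a, c) * probOf p (fun ω => (B ω, C ω)) (b, c)

/-! ### Coordination schemes and adversaries -/

/-- Cardinality of the secret-key alphabet: `max 1 ⌊2^{n R₀}⌋`. -/
def keyCard (R0 : ℝ) (n : ℕ) : ℕ := max 1 ⌊(2 : ℝ) ^ ((n : ℝ) * R0)⌋₊

/-- Cardinality of the message alphabet: `max 1 ⌊2^{n R}⌋`. -/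
def msgCard (R : ℝ) (n : ℕ) : ℕ := max 1 ⌊(2 : ℝ) ^ ((n : ℝ) * R)⌋₊

/-- An `(R₀, R, n)` coordination scheme: a randomized encoder `p(j | xⁿ, k)` and a
randomized causal decoder `{p(yᵢ | j, k, x^{i-1}, y^{i-1}, z^{i-1})}`. -/
structure Scheme (X Y Z : Type) [Fintype X] [Fintype Y] [Fintype Z]
    (R0 R : ℝ) (n : ℕ) where
  enc : (Fin n → X) → Fin (keyCard R0 n) → Fin (msgCard R n) → ℝ
  enc_pmf : ∀ x k, IsPMF (enc x k)
  dec : Fin n → Fin (msgCard R n) → Fin (keyCard R0 n) →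
      (Fin n → X) → (Fin n → Y) → (Fin n → Z) → Y → ℝ
  dec_pmf : ∀ i j k x y z, IsPMF (dec i j k x y z)
  dec_causal : ∀ i j k x y z x' y' z',
      (∀ m, m < i → x m = x' m) → (∀ m, m < i → y m = y' m) →
      (∀ m, m < i → z m = z' m) →
      dec i j k x y z = dec i j k x' y' z'

/-- An adversary strategy with full causal information:
`{p(zᵢ | j, x^{i-1}, y^{i-1}, z^{i-1})}`. -/
structure Adversary (X Y Z : Type) [Fintype X] [Fintype Y] [Fintype Z]
    (R : ℝ) (n : ℕ) where
  adv : Fin n → Fin (msgCard R n) →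
      (Fin n → X) → (Fin n → Y) → (Fin n → Z) → Z → ℝ
  adv_pmf : ∀ i j x y z, IsPMF (adv i j x y z)
  adv_causal : ∀ i j x y z x' y' z',
      (∀ m, m < i → x m = x' m) → (∀ m, m < i → y m = y' m) →
      (∀ m, m < i → z m = z' m) →
      adv i j x y z = adv i j x' y' z'

/-- Sample space of a block of length `n`: `(Xⁿ, K, J, Yⁿ, Zⁿ)`. -/
abbrev Outc (X Y Z : Type) (R0 R : ℝ) (n : ℕ) : Type :=
  (Fin n → X) × Fin (keyCard R0 n) × Fin (msgCard R n) × (Fin n → Y) × (Fin n → Z)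

/-- The induced joint pmf of `(Xⁿ, K, J, Yⁿ, Zⁿ)`:
`p₀ⁿ(xⁿ)·|𝒦|⁻¹·p(j|xⁿ,k)·∏ᵢ p(yᵢ|j,k,x^{i-1},y^{i-1},z^{i-1})·p(zᵢ|j,x^{i-1},y^{i-1},z^{i-1})`. -/
def jointPMF {X Y Z : Type} [Fintype X] [Fintype Y] [Fintype Z] {R0 R : ℝ} {n : ℕ}
    (p0 : X → ℝ) (S : Scheme X Y Z R0 R n) (A : Adversary X Y Z R n) :
    Outc X Y Z R0 R n → ℝ :=
  fun ω => (∏ i, p0 (ω.1 i)) * ((keyCard R0 n : ℝ))⁻¹ *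
    S.enc ω.1 ω.2.1 ω.2.2.1 *
    ∏ i, S.dec i ω.2.2.1 ω.2.1 ω.1 ω.2.2.2.1 ω.2.2.2.2 (ω.2.2.2.1 i) *
      A.adv i ω.2.2.1 ω.1 ω.2.2.2.1 ω.2.2.2.2 (ω.2.2.2.2 i)

/-- The expected average payoff `E[(1/n) Σᵢ π(Xᵢ, Yᵢ, Zᵢ)]`. -/
def avgValue {X Y Z : Type} [Fintype X] [Fintype Y] [Fintype Z] {R0 R : ℝ} {n : ℕ}
    (p0 : X → ℝ) (π : X → Y → Z → ℝ)
    (S : Scheme X Y Z R0 R n) (A : Adversary X Y Z R n) : ℝ :=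
  ∑ ω : Outc X Y Z R0 R n, jointPMF p0 S A ω *
    ((n : ℝ)⁻¹ * ∑ i, π (ω.1 i) (ω.2.2.2.1 i) (ω.2.2.2.2 i))

/-- The robust achievable value `Π_{p₀}(R₀, R)`: the supremum over blocklengths and schemes
of the least average payoff over all (fully informed) adversary strategies. -/
def robustValue {X Y Z : Type} [Fintype X] [Fintype Y] [Fintype Z]
    (p0 : X → ℝ) (π : X → Y → Z → ℝ) (R0 R : ℝ) : ℝ :=
  ⨆ (n : ℕ) (_ : 0 < n) (S : Scheme X Y Z R0 R n),
    ⨅ A : Adversary X Y Z R n, avgValue p0 π S A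

/-! ### Single-letter quantities -/

/-- The single-letter joint pmf of `(X, Y, U, V)` built from the source `p₀` and a
conditional pmf `p(y,u,v|x)`. -/
def slJoint {X Y U V : Type} (p0 : X → ℝ) (w : X → Y × U × V → ℝ) :
    X × Y × U × V → ℝ :=
  fun q => p0 q.1 * w q.1 q.2

/-- Membership in the single-letter region `𝒫_{p₀}(R₀,R)`: `p(y,u,v|x)` is a conditional pmf,
`X — (U,V) — Y` is a Markov chain, `R₀ ≥ I(X,Y;V|U)` and `R ≥ I(X;U,V)`. -/
def memP {X Y U V : Type} [Fintype X] [Fintype Y] [Fintype U] [Fintype V]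
    (p0 : X → ℝ) (w : X → Y × U × V → ℝ) (R0 R : ℝ) : Prop :=
  (∀ x, IsPMF (w x)) ∧
  CondIndep (slJoint p0 w) (fun q => q.1) (fun q => q.2.1) (fun q => q.2.2) ∧
  R0 ≥ condMutualInfo (slJoint p0 w)
      (fun q => (q.1, q.2.1)) (fun q => q.2.2.2) (fun q => q.2.2.1) ∧
  R ≥ mutualInfo (slJoint p0 w) (fun q => q.1) (fun q => q.2.2)

/-- The expected payoff `E[π(X, Y, z(U))]` when the adversary plays a function `z : U → Z`. -/
def slPayoff {X Y Z U V : Type} [Fintype X] [Fintype Y] [Fintype U] [Fintype V]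
    (p0 : X → ℝ) (w : X → Y × U × V → ℝ) (π : X → Y → Z → ℝ) (z : U → Z) : ℝ :=
  ∑ q : X × Y × U × V, slJoint p0 w q * π q.1 q.2.1 (z q.2.2.1)

/-- The single-letter value `Γ_{p₀,π}(R₀,R)`: the supremum over finite auxiliary alphabets
`𝒰, 𝒱` and conditional pmfs `p(y,u,v|x) ∈ 𝒫_{p₀}(R₀,R)` of `min_{z : 𝒰 → 𝒵} E[π(X,Y,z(U))]`. -/
def Gamma {X Y Z : Type} [Fintype X] [Fintype Y] [Fintype Z]
    (p0 : X → ℝ) (π : X → Y → Z → ℝ) (R0 R : ℝ) : ℝ :=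
  sSup {v : ℝ | ∃ (U V : Type) (_ : Fintype U) (_ : Fintype V)
    (w : X → Y × U × V → ℝ), memP p0 w R0 R ∧
    v = ⨅ z : U → Z, slPayoff p0 w π z}


/-- The value obtainable with rate `R` when the adversary learns nothing and hence plays a
constant action: the supremum over conditional pmfs `p(y|x)` with `I(X;Y) ≤ R` of
`min_{z ∈ 𝒵} E[π(X,Y,z)]`. -/
def privateValue {X Y Z : Type} [Fintype X] [Fintype Y] [Fintype Z]
    (p0 : X → ℝ) (π : X → Y → Z → ℝ) (R : ℝ) : ℝ :=
  sSup {v : ℝ | ∃ w : X → Y → ℝ, (∀ x, IsPMF (w x)) ∧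
    mutualInfo (fun q : X × Y => p0 q.1 * w q.1 q.2) (fun q => q.1) (fun q => q.2) ≤ R ∧
    v = ⨅ z : Z, ∑ q : X × Y, p0 q.1 * w q.1 q.2 * π q.1 q.2 z}

/-! At key rate zero the constraint `I(X,Y;V|U) ≤ 0` forces `(X,Y) ⟂ V | U` (equality case of
Gibbs' inequality), and together with the Markov chain `X — (U,V) — Y` this gives `X ⟂ Y | U`.
Take a uniform bit `X` and the matching game `π(x,y,z) = 1[x = y] - 1[x = z]`. An adversary who
sees `U` guesses `X` by its maximum a posteriori value; by conditional independence the decoder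
matches `X` no more often than that guess does, so `Γ(0,R) ≤ 0`. An adversary without
information wins only half the time against the copy channel `Y = X`, which costs one bit of
rate, so the private value at `R = 1` is at least `1/2`. -/

section ProbOf

variable {Ω α β : Type} [Fintype Ω] {p : Ω → ℝ}

lemma probOf_nonneg (hp : ∀ ω, 0 ≤ p ω) (A : Ω → α) (a : α) : 0 ≤ probOf p A a :=
  Finset.sum_nonneg fun ω _ => by split_ifs <;> simp [hp ω]

lemma probOf_congr {A : Ω → α} {B : Ω → β} {a : α} {b : β} (h : ∀ ω, A ω = a ↔ B ω = b) :
    probOf p A a = probOf p B b :=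
  Finset.sum_congr rfl fun ω _ => if_congr (h ω) rfl rfl

lemma sum_probOf_mul [Fintype α] (A : Ω → α) (g : α → ℝ) :
    ∑ a, probOf p A a * g a = ∑ ω, p ω * g (A ω) := by
  simp only [probOf, Finset.sum_mul, ite_mul, zero_mul]
  rw [Finset.sum_comm]
  simp

lemma sum_probOf [Fintype α] (A : Ω → α) : ∑ a, probOf p A a = ∑ ω, p ω := by
  simpa using sum_probOf_mul (p := p) A fun _ => 1

lemma sum_probOf_prod_fst [Fintype α] (A : Ω → α) (B : Ω → β) (b : β) :
    ∑ a, probOf p (fun ω => (A ω, B ω)) (a, b) = probOf p B b := by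
  simp only [probOf, Prod.mk.injEq]
  rw [Finset.sum_comm]
  refine Finset.sum_congr rfl fun ω _ => ?_
  by_cases hb : B ω = b <;> simp [hb]

lemma sum_probOf_eq_of_iff {δ : Type} [Fintype α] {F : Ω → δ} {f : α → δ} {G : Ω → β} {b : β}
    (I : Ω → α) (h : ∀ ω a, F ω = f a ↔ I ω = a ∧ G ω = b) :
    ∑ a, probOf p F (f a) = probOf p G b := by
  rw [← sum_probOf_prod_fst I G b]
  exact Finset.sum_congr rfl fun a _ => probOf_congr fun ω => by rw [h, Prod.mk.injEq]

lemma probOf_le_probOf_comp (hp : ∀ ω, 0 ≤ p ω) (A : Ω → α) (f : α → β) (a : α) :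
    probOf p A a ≤ probOf p (fun ω => f (A ω)) (f a) :=
  Finset.sum_le_sum fun ω _ => by
    by_cases h : A ω = a
    · simp [h]
    · rw [if_neg h]; split_ifs <;> simp [hp ω]

lemma entropy_eq_neg_sum [Fintype α] (A : Ω → α) :
    entropy p A = -∑ ω, p ω * Real.logb 2 (probOf p A (A ω)) := by
  rw [entropy, sum_probOf_mul A fun a => Real.logb 2 (probOf p A a)]

end ProbOf

section Gibbs

open Real InformationTheory

lemma mul_log_div_sub_add_eq_mul_klFun {t m : ℝ} (hm : m ≠ 0) :
    t * log (t / m) - t + m = m * klFun (t / m) := by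
  unfold klFun
  field_simp
  ring

lemma eq_of_sum_mul_log_div_nonpos {ι : Type} [Fintype ι] {t m : ι → ℝ}
    (ht : ∀ i, 0 ≤ t i) (hm : ∀ i, 0 ≤ m i) (hac : ∀ i, 0 < t i → 0 < m i)
    (hsum : ∑ i, m i ≤ ∑ i, t i) (hlog : ∑ i, t i * log (t i / m i) ≤ 0) : t = m := by
  set g : ι → ℝ := fun i => t i * log (t i / m i) - t i + m i with hg
  have hterm : ∀ i, 0 ≤ g i ∧ (g i = 0 → t i = m i) := by
    intro i
    rcases (ht i).eq_or_lt with h0 | hpos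
    · simp only [hg, ← h0, zero_mul, sub_zero, zero_add]
      exact ⟨hm i, Eq.symm⟩
    · have hmpos := hac i hpos
      have hklFun : 0 ≤ t i / m i := div_nonneg (ht i) (hm i)
      simp only [hg, mul_log_div_sub_add_eq_mul_klFun hmpos.ne', mul_eq_zero,
        hmpos.ne', false_or, klFun_eq_zero_iff hklFun, div_eq_one_iff_eq hmpos.ne']
      exact ⟨mul_nonneg hmpos.le (klFun_nonneg hklFun), id⟩
  have hgsum : ∑ i, g i = 0 := by
    refine le_antisymm ?_ (Finset.sum_nonneg fun i _ => (hterm i).1)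
    simp only [hg, Finset.sum_add_distrib, Finset.sum_sub_distrib]
    linarith
  funext i
  exact (hterm i).2 ((Finset.sum_eq_zero_iff_of_nonneg fun i _ => (hterm i).1).mp hgsum i
    (Finset.mem_univ i))

end Gibbs

section CondMutualInfo

variable {Ω α β γ : Type} [Fintype Ω] [Fintype α] [Fintype β] [Fintype γ] {p : Ω → ℝ}

lemma condMutualInfo_eq_sum (hp : ∀ ω, 0 ≤ p ω) (A : Ω → α) (B : Ω → β) (C : Ω → γ) :
    condMutualInfo p A B C = ∑ x : α × β × γ, probOf p (fun ω => (A ω, B ω, C ω)) x *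
      Real.logb 2 (probOf p (fun ω => (A ω, B ω, C ω)) x * probOf p C x.2.2 /
        (probOf p (fun ω => (A ω, C ω)) (x.1, x.2.2) *
          probOf p (fun ω => (B ω, C ω)) (x.2.1, x.2.2))) := by
  set t := probOf p (fun ω => (A ω, B ω, C ω))
  have hsplit : ∀ x : α × β × γ,
      t x * Real.logb 2 (t x * probOf p C x.2.2 /
        (probOf p (fun ω => (A ω, C ω)) (x.1, x.2.2) *
          probOf p (fun ω => (B ω, C ω)) (x.2.1, x.2.2)))
      = t x * (Real.logb 2 (t x) + Real.logb 2 (probOf p C x.2.2)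
          - Real.logb 2 (probOf p (fun ω => (A ω, C ω)) (x.1, x.2.2))
          - Real.logb 2 (probOf p (fun ω => (B ω, C ω)) (x.2.1, x.2.2))) := by
    intro x
    rcases (probOf_nonneg hp (fun ω => (A ω, B ω, C ω)) x).eq_or_lt with h0 | hpos
    · simp [t, ← h0]
    have hr : t x ≤ probOf p (fun ω => (A ω, C ω)) (x.1, x.2.2) :=
      probOf_le_probOf_comp hp _ (fun x : α × β × γ => (x.1, x.2.2)) x
    have hs : t x ≤ probOf p (fun ω => (B ω, C ω)) (x.2.1, x.2.2) :=
      probOf_le_probOf_comp hp _ (fun x : α × β × γ => (x.2.1, x.2.2)) x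
    have hq : t x ≤ probOf p C x.2.2 :=
      probOf_le_probOf_comp hp _ (fun x : α × β × γ => x.2.2) x
    have hr0 := (hpos.trans_le hr).ne'
    have hs0 := (hpos.trans_le hs).ne'
    rw [Real.logb_div (mul_ne_zero hpos.ne' (hpos.trans_le hq).ne') (mul_ne_zero hr0 hs0),
      Real.logb_mul hpos.ne' (hpos.trans_le hq).ne', Real.logb_mul hr0 hs0]
    ring
  rw [Finset.sum_congr rfl fun x _ => hsplit x, sum_probOf_mul (fun ω => (A ω, B ω, C ω))
    fun x => Real.logb 2 (t x) + Real.logb 2 (probOf p C x.2.2)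
      - Real.logb 2 (probOf p (fun ω => (A ω, C ω)) (x.1, x.2.2))
      - Real.logb 2 (probOf p (fun ω => (B ω, C ω)) (x.2.1, x.2.2))]
  simp only [condMutualInfo, entropy_eq_neg_sum, mul_add, mul_sub, Finset.sum_add_distrib,
    Finset.sum_sub_distrib, t]
  ring

theorem condIndep_of_condMutualInfo_nonpos (hp : IsPMF p) (A : Ω → α) (B : Ω → β) (C : Ω → γ)
    (h : condMutualInfo p A B C ≤ 0) : CondIndep p A B C := by
  set t := probOf p (fun ω => (A ω, B ω, C ω))
  set r := probOf p (fun ω => (A ω, C ω))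
  set s := probOf p (fun ω => (B ω, C ω))
  set q := probOf p C
  have hr : ∀ x, t x ≤ r (x.1, x.2.2) := fun x =>
    probOf_le_probOf_comp hp.1 _ (fun x : α × β × γ => (x.1, x.2.2)) x
  have hs : ∀ x, t x ≤ s (x.2.1, x.2.2) := fun x =>
    probOf_le_probOf_comp hp.1 _ (fun x : α × β × γ => (x.2.1, x.2.2)) x
  have hq : ∀ a c, r (a, c) ≤ q c := fun a c =>
    probOf_le_probOf_comp hp.1 _ (fun x : α × γ => x.2) (a, c)
  set m : α × β × γ → ℝ := fun x => r (x.1, x.2.2) * s (x.2.1, x.2.2) / q x.2.2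
  have hsum_q : ∑ c, q c = 1 := (sum_probOf C).trans hp.2
  have hsum_m : ∑ x, m x = 1 := by
    simp only [m, Fintype.sum_prod_type_right]
    rw [← hsum_q]
    refine Finset.sum_congr rfl fun c _ => ?_
    simp_rw [← Finset.sum_div, ← Finset.sum_mul, ← Finset.mul_sum]
    rw [sum_probOf_prod_fst, sum_probOf_prod_fst, mul_self_div_self]
  have hlog : ∑ x, t x * Real.log (t x / m x) ≤ 0 := by
    rw [condMutualInfo_eq_sum hp.1] at h
    simp only [Real.logb, ← mul_div_assoc, ← Finset.sum_div] at h
    simpa only [m, div_div_eq_mul_div] using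
      ((div_nonpos_iff.mp h).resolve_left fun h' => (Real.log_pos one_lt_two).not_ge h'.2).1
  have htm : t = m := by
    refine eq_of_sum_mul_log_div_nonpos (probOf_nonneg hp.1 _)
      (fun x => div_nonneg (mul_nonneg (probOf_nonneg hp.1 _ _) (probOf_nonneg hp.1 _ _))
        (probOf_nonneg hp.1 _ _)) (fun x hx => ?_) ?_ hlog
    · have hr' := hx.trans_le (hr x)
      exact div_pos (mul_pos hr' (hx.trans_le (hs x))) (hr'.trans_le (hq _ _))
    · rw [hsum_m, sum_probOf, hp.2]
  intro a b c
  rcases eq_or_ne (q c) 0 with hc | hc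
  · have hrc : r (a, c) = 0 := le_antisymm (hc ▸ hq a c) (probOf_nonneg hp.1 _ _)
    change t (a, b, c) * q c = r (a, c) * s (b, c)
    rw [hc, hrc, mul_zero, zero_mul]
  · change t (a, b, c) * q c = r (a, c) * s (b, c)
    rw [htm]
    exact div_mul_cancel₀ _ hc

end CondMutualInfo

section Graphoid

variable {Ω α β γ δ : Type} [Fintype Ω] {p : Ω → ℝ}
  {A : Ω → α} {B : Ω → β} {C : Ω → γ} {D : Ω → δ}

theorem CondIndep.fst [Fintype β] (h : CondIndep p (fun ω => (A ω, B ω)) D C) :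
    CondIndep p A D C := by
  intro a d c
  have hAD : ∑ b, probOf p (fun ω => ((A ω, B ω), D ω, C ω)) ((a, b), d, c) =
      probOf p (fun ω => (A ω, D ω, C ω)) (a, d, c) :=
    sum_probOf_eq_of_iff B fun ω b => by simp only [Prod.mk.injEq]; tauto
  have hA : ∑ b, probOf p (fun ω => ((A ω, B ω), C ω)) ((a, b), c) =
      probOf p (fun ω => (A ω, C ω)) (a, c) :=
    sum_probOf_eq_of_iff B fun ω b => by simp only [Prod.mk.injEq]; tauto
  rw [← hAD, ← hA, Finset.sum_mul, Finset.sum_mul]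
  exact Finset.sum_congr rfl fun b _ => h (a, b) d c

theorem CondIndep.snd [Fintype α] (h : CondIndep p (fun ω => (A ω, B ω)) D C) :
    CondIndep p B D C := by
  intro b d c
  have hBD : ∑ a, probOf p (fun ω => ((A ω, B ω), D ω, C ω)) ((a, b), d, c) =
      probOf p (fun ω => (B ω, D ω, C ω)) (b, d, c) :=
    sum_probOf_eq_of_iff A fun ω a => by simp only [Prod.mk.injEq]; tauto
  have hB : ∑ a, probOf p (fun ω => ((A ω, B ω), C ω)) ((a, b), c) =
      probOf p (fun ω => (B ω, C ω)) (b, c) :=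
    sum_probOf_eq_of_iff A fun ω a => by simp only [Prod.mk.injEq]; tauto
  rw [← hBD, ← hB, Finset.sum_mul, Finset.sum_mul]
  exact Finset.sum_congr rfl fun a _ => h (a, b) d c

theorem CondIndep.of_cond_prod [Fintype α] [Fintype β] [Fintype δ] (hp : ∀ ω, 0 ≤ p ω)
    (h : CondIndep p A B fun ω => (C ω, D ω)) (hD : CondIndep p (fun ω => (A ω, B ω)) D C) :
    CondIndep p A B C := by
  set T := fun a b c d => probOf p (fun ω => (A ω, B ω, C ω, D ω)) (a, b, c, d)
  set Q := fun c d => probOf p (fun ω => (C ω, D ω)) (c, d)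
  set r := fun a c => probOf p (fun ω => (A ω, C ω)) (a, c)
  set s := fun b c => probOf p (fun ω => (B ω, C ω)) (b, c)
  set q := probOf p C
  have hAD : ∀ a c d, probOf p (fun ω => (A ω, C ω, D ω)) (a, c, d) * q c = r a c * Q c d :=
    fun a c d => by
      convert hD.fst a d c using 2 <;>
        exact probOf_congr fun ω => by simp only [Prod.mk.injEq]; tauto
  have hBD : ∀ b c d, probOf p (fun ω => (B ω, C ω, D ω)) (b, c, d) * q c = s b c * Q c d :=
    fun b c d => by
      convert hD.snd b d c using 2 <;>
        exact probOf_congr fun ω => by simp only [Prod.mk.injEq]; tauto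
  have hTQ : ∀ a b c d, T a b c d ≤ Q c d := fun a b c d =>
    probOf_le_probOf_comp hp _ (fun x : α × β × γ × δ => (x.2.2.1, x.2.2.2)) (a, b, c, d)
  have hrq : ∀ a c, r a c ≤ q c := fun a c =>
    probOf_le_probOf_comp hp _ (fun x : α × γ => x.2) (a, c)
  have hfactor : ∀ a b c d, T a b c d * (q c * q c) = r a c * s b c * Q c d := by
    intro a b c d
    rcases eq_or_ne (Q c d) 0 with hQ | hQ
    · have hT0 : T a b c d = 0 := le_antisymm (hQ ▸ hTQ a b c d) (probOf_nonneg hp _ _)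
      rw [hT0, hQ, zero_mul, mul_zero]
    · refine mul_right_cancel₀ hQ ?_
      linear_combination (q c * q c) * h a b (c, d)
        + probOf p (fun ω => (B ω, C ω, D ω)) (b, c, d) * q c * hAD a c d
        + r a c * Q c d * hBD b c d
  have hsum_T : ∀ a b c, ∑ d, T a b c d = probOf p (fun ω => (A ω, B ω, C ω)) (a, b, c) :=
    fun a b c => sum_probOf_eq_of_iff (f := fun d => (a, b, c, d)) D fun ω d => by
      simp only [Prod.mk.injEq]; tauto
  have hsum_Q : ∀ c, ∑ d, Q c d = q c := fun c =>
    sum_probOf_eq_of_iff (f := fun d => (c, d)) D fun ω d => by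
      simp only [Prod.mk.injEq]; tauto
  intro a b c
  rcases eq_or_ne (q c) 0 with hq | hq
  · have hr0 : r a c = 0 := le_antisymm (hq ▸ hrq a c) (probOf_nonneg hp _ _)
    change _ * q c = r a c * _
    rw [hq, hr0, mul_zero, zero_mul]
  · have hsum := Finset.sum_congr rfl fun d (_ : d ∈ Finset.univ) => hfactor a b c d
    rw [← Finset.sum_mul, ← Finset.mul_sum, hsum_T, hsum_Q] at hsum
    exact mul_right_cancel₀ hq (by linear_combination hsum)

end Graphoid

section Guessing

variable {Ω α γ : Type} [Fintype Ω] [Fintype α] {p : Ω → ℝ} {A B : Ω → α} {C : Ω → γ}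

theorem CondIndep.sum_probOf_diag_le (hp : ∀ ω, 0 ≤ p ω) (h : CondIndep p A B C) (c : γ)
    {a₀ : α} (ha₀ : ∀ a, probOf p (fun ω => (A ω, C ω)) (a, c) ≤
      probOf p (fun ω => (A ω, C ω)) (a₀, c)) :
    ∑ a, probOf p (fun ω => (A ω, B ω, C ω)) (a, a, c) ≤
      probOf p (fun ω => (A ω, C ω)) (a₀, c) := by
  rcases (probOf_nonneg hp C c).eq_or_lt with hc | hc
  · have ht : ∀ a, probOf p (fun ω => (A ω, B ω, C ω)) (a, a, c) ≤ 0 := fun a =>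
      hc ▸ probOf_le_probOf_comp hp _ (fun x : α × α × γ => x.2.2) (a, a, c)
    exact (Finset.sum_nonpos fun a _ => ht a).trans (probOf_nonneg hp _ _)
  refine le_of_mul_le_mul_right ?_ hc
  calc (∑ a, probOf p (fun ω => (A ω, B ω, C ω)) (a, a, c)) * probOf p C c
      = ∑ a, probOf p (fun ω => (A ω, C ω)) (a, c) * probOf p (fun ω => (B ω, C ω)) (a, c) := by
        rw [Finset.sum_mul]
        exact Finset.sum_congr rfl fun a _ => h a a c
    _ ≤ ∑ a, probOf p (fun ω => (A ω, C ω)) (a₀, c) * probOf p (fun ω => (B ω, C ω)) (a, c) :=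
        Finset.sum_le_sum fun a _ => mul_le_mul_of_nonneg_right (ha₀ a) (probOf_nonneg hp _ _)
    _ = probOf p (fun ω => (A ω, C ω)) (a₀, c) * probOf p C c := by
        rw [← Finset.mul_sum, sum_probOf_prod_fst]

theorem CondIndep.sum_ite_eq_le [Fintype γ] [DecidableEq α] (hp : ∀ ω, 0 ≤ p ω)
    (h : CondIndep p A B C) {z : γ → α}
    (hz : ∀ a c, probOf p (fun ω => (A ω, C ω)) (a, c) ≤
      probOf p (fun ω => (A ω, C ω)) (z c, c)) :
    ∑ ω, (if A ω = B ω then p ω else 0) ≤ ∑ ω, if A ω = z (C ω) then p ω else 0 := by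
  have hdiag := sum_probOf_mul (p := p) (fun ω => (A ω, B ω, C ω))
    fun x => if x.1 = x.2.1 then 1 else 0
  have hguess := sum_probOf_mul (p := p) (fun ω => (A ω, C ω))
    fun x => if x.1 = z x.2 then 1 else 0
  simp only [mul_ite, mul_one, mul_zero] at hdiag hguess
  rw [← hdiag, ← hguess]
  simp only [Fintype.sum_prod_type_right, Finset.sum_ite_eq', Finset.mem_univ, if_true]
  exact Finset.sum_le_sum fun c _ => h.sum_probOf_diag_le hp c (hz · c)

end Guessing

lemma IsPMF.mul_cond {α β : Type} [Fintype α] [Fintype β] {p : α → ℝ} (hp : IsPMF p)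
    {w : α → β → ℝ} (hw : ∀ a, IsPMF (w a)) : IsPMF fun q : α × β => p q.1 * w q.1 q.2 := by
  refine ⟨fun q => mul_nonneg (hp.1 _) ((hw _).1 _), ?_⟩
  simp only [Fintype.sum_prod_type, ← Finset.mul_sum, (hw _).2, mul_one, hp.2]

def matchingPayoff {α : Type} [DecidableEq α] (x y z : α) : ℝ :=
  (if x = y then 1 else 0) - (if x = z then 1 else 0)

lemma matchingPayoff_le_one {α : Type} [DecidableEq α] (x y z : α) :
    matchingPayoff x y z ≤ 1 := by
  unfold matchingPayoff
  split_ifs <;> norm_num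

theorem Gamma_matchingPayoff_zero_nonpos {X : Type} [Fintype X] [DecidableEq X] [Nonempty X]
    {p0 : X → ℝ} (hp0 : IsPMF p0) (R : ℝ) : Gamma p0 (matchingPayoff (α := X)) 0 R ≤ 0 := by
  refine Real.sSup_nonpos ?_
  rintro _ ⟨U, V, _, _, w, ⟨hw, hMarkov, hkey, -⟩, rfl⟩
  have hP : IsPMF (slJoint p0 w) := hp0.mul_cond hw
  have hXY : CondIndep (slJoint p0 w) (fun q => q.1) (fun q => q.2.1) (fun q => q.2.2.1) :=
    hMarkov.of_cond_prod hP.1 (condIndep_of_condMutualInfo_nonpos hP _ _ _ hkey)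
  choose z hz using fun u =>
    Finite.exists_max fun x => probOf (slJoint p0 w) (fun q => (q.1, q.2.2.1)) (x, u)
  calc ⨅ z, slPayoff p0 w matchingPayoff z ≤ slPayoff p0 w matchingPayoff z :=
        ciInf_le (Set.finite_range _).bddBelow z
    _ ≤ 0 := by
      simp only [slPayoff, matchingPayoff, mul_sub, mul_ite, mul_one, mul_zero,
        Finset.sum_sub_distrib, sub_nonpos]
      exact hXY.sum_ite_eq_le hP.1 fun x u => hz u x

theorem le_privateValue {X Y Z : Type} [Fintype X] [Fintype Y] [Fintype Z] [Nonempty Z]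
    {p0 : X → ℝ} {π : X → Y → Z → ℝ} {M R : ℝ} (hp0 : IsPMF p0) (hπ : ∀ x y z, π x y z ≤ M)
    {w : X → Y → ℝ} (hw : ∀ x, IsPMF (w x))
    (hI : mutualInfo (fun q : X × Y => p0 q.1 * w q.1 q.2) (fun q => q.1) (fun q => q.2) ≤ R) :
    ⨅ z : Z, ∑ q : X × Y, p0 q.1 * w q.1 q.2 * π q.1 q.2 z ≤ privateValue p0 π R := by
  refine le_csSup ⟨M, ?_⟩ ⟨w, hw, hI, rfl⟩
  rintro _ ⟨w', hw', -, rfl⟩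
  have hJ := hp0.mul_cond hw'
  calc ⨅ z : Z, ∑ q : X × Y, p0 q.1 * w' q.1 q.2 * π q.1 q.2 z
      ≤ ∑ q : X × Y, p0 q.1 * w' q.1 q.2 * π q.1 q.2 (Classical.arbitrary Z) :=
        ciInf_le (Set.finite_range _).bddBelow _
    _ ≤ ∑ q : X × Y, p0 q.1 * w' q.1 q.2 * M :=
        Finset.sum_le_sum fun q _ => mul_le_mul_of_nonneg_left (hπ _ _ _) (hJ.1 q)
    _ = M := by rw [← Finset.sum_mul, hJ.2, one_mul]

lemma isPMF_ite_eq {α : Type} [Fintype α] [DecidableEq α] (a : α) :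
    IsPMF fun b => if a = b then (1 : ℝ) else 0 :=
  ⟨fun _ => ite_nonneg zero_le_one le_rfl, by simp⟩

lemma mutualInfo_copy_uniform_bool :
    mutualInfo (fun q : Bool × Bool => 1 / 2 * (if q.1 = q.2 then (1 : ℝ) else 0))
      (fun q => q.1) (fun q => q.2) = 1 := by
  simp [mutualInfo, entropy, probOf, Fintype.sum_prod_type]

lemma matchingPayoff_copy_uniform_bool (z : Bool) :
    ∑ q : Bool × Bool, 1 / 2 * (if q.1 = q.2 then (1 : ℝ) else 0) * matchingPayoff q.1 q.2 z
      = 1 / 2 := by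
  cases z <;> simp [Fintype.sum_prod_type, matchingPayoff]

/-- **Discontinuity at zero key rate.**  There are finite alphabets, a source pmf, a payoff
function and a rate `R ≥ 0` such that the value achievable for every positive key rate
against a message-only adversary, `sup_{p(y|x) : I(X;Y) ≤ R} min_z E[π(X,Y,z)]`, strictly
exceeds the single-letter value `Γ_{p₀,π}(0,R)` at key rate `R₀ = 0`. -/
theorem discontinuity_at_zero_key_rate :
    ∃ (X Y Z : Type) (_ : Fintype X) (_ : Fintype Y) (_ : Fintype Z)
      (_ : Nonempty X) (_ : Nonempty Y) (_ : Nonempty Z)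
      (p0 : X → ℝ) (_ : IsPMF p0) (π : X → Y → Z → ℝ) (R : ℝ),
      0 ≤ R ∧ privateValue p0 π R > Gamma p0 π 0 R := by
  have hp0 : IsPMF fun _ : Bool => (1 / 2 : ℝ) := ⟨fun _ => by norm_num, by norm_num⟩
  refine ⟨Bool, Bool, Bool, inferInstance, inferInstance, inferInstance, ⟨true⟩, ⟨true⟩, ⟨true⟩,
    fun _ => 1 / 2, hp0, matchingPayoff, 1, zero_le_one, ?_⟩
  calc Gamma (fun _ : Bool => (1 / 2 : ℝ)) matchingPayoff 0 1
      ≤ 0 := Gamma_matchingPayoff_zero_nonpos hp0 1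
    _ < 1 / 2 := one_half_pos
    _ = ⨅ z : Bool, ∑ q : Bool × Bool,
          1 / 2 * (if q.1 = q.2 then (1 : ℝ) else 0) * matchingPayoff q.1 q.2 z := by
        simp only [matchingPayoff_copy_uniform_bool, ciInf_const]
    _ ≤ privateValue (fun _ : Bool => (1 / 2 : ℝ)) matchingPayoff 1 :=
        le_privateValue (w := fun x y => if x = y then 1 else 0) hp0 matchingPayoff_le_one
          isPMF_ite_eq mutualInfo_copy_uniform_bool.le
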